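/- arXiv:2603.23303 — 9 statements merged into one kernel-verified Lean document; each statement's English description precedes it below -/
import Mathlib

section
/- Let X ∈ L²_ℙ(Ω;ℝ^d) with law μ := X♯ℙ, and let Φ be a real-valued function on P₂(ℝ^d). Assume Φ is Fréchet differentiable at μ in the plan-wise sense: there exists g ∈ L²_μ(ℝ^d;ℝ^d) such that for every ε > 0 there is δ > 0 so that for every ν ∈ P₂(ℝ^d) and every coupling γ of μ and ν with W_{2,γ} := (∫|x−y|² dγ)^{1/2} ≤ δ one has |Φ(ν) − Φ(μ) − ∫⟨g(x), y−x⟩ dγ(x,y)| ≤ ε·W_{2,γ}. Then the lift Φ̃ : L²_ℙ(Ω;ℝ^d) → ℝ, Φ̃(Y) := Φ(Y♯ℙ), is Fréchet differentiable at X, with derivative the continuous linear functional H ↦ ∫_Ω ⟨g(X(ω)), H(ω)⟩ dℙ(ω); equivalently, the gradient of Φ̃ at X equals g∘X in L²_ℙ(Ω;ℝ^d). -/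
/-!
Couple the laws of `X` and `Y` through the joint law of `(X, Y)`. The transport cost of this
coupling is `‖Y - X‖²` in `L²`, and its linear term `∫ ⟪g x, y - x⟫` is the `L²` inner product
`⟪g ∘ X, Y - X⟫`, so the plan-wise expansion of `Φ` along this coupling is exactly the Fréchet
expansion of the lift at `X`.
-/

open MeasureTheory
open scoped RealInnerProductSpace

namespace MeasureTheory.L2

variable {Ω E : Type*} [MeasurableSpace Ω] {ℙ : Measure Ω} [NormedAddCommGroup E]

section

variable [InnerProductSpace ℝ E]

theorem norm_sq_eq_integral_norm_sq (f : Lp E 2 ℙ) : ‖f‖ ^ 2 = ∫ ω, ‖f ω‖ ^ 2 ∂ℙ := by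
  simp only [← real_inner_self_eq_norm_sq, inner_def]

theorem inner_eq_integral_of_ae_eq {G : Lp E 2 ℙ} {u : Ω → E} (hG : G =ᵐ[ℙ] u)
    (H : Lp E 2 ℙ) : ⟪G, H⟫ = ∫ ω, ⟪u ω, H ω⟫ ∂ℙ :=
  integral_congr_ae (hG.mono fun ω h => by simp only [h])

end

variable [MeasurableSpace E] [BorelSpace E]

theorem integrable_norm_sq_map (Y : Lp E 2 ℙ) :
    Integrable (fun y => ‖y‖ ^ 2) (ℙ.map Y) := by
  rw [integrable_map_measure (by fun_prop) (Lp.aestronglyMeasurable Y).aemeasurable]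
  exact (memLp_two_iff_integrable_sq_norm (Lp.aestronglyMeasurable Y)).mp (Lp.memLp Y)

variable [SecondCountableTopology E]

theorem integrable_norm_sub_sq_map_prodMk (X Y : Lp E 2 ℙ) :
    Integrable (fun p : E × E => ‖p.1 - p.2‖ ^ 2) (ℙ.map fun ω => (X ω, Y ω)) := by
  rw [integrable_map_measure (by fun_prop)
    ((Lp.aestronglyMeasurable X).aemeasurable.prodMk (Lp.aestronglyMeasurable Y).aemeasurable)]
  have hXY : MemLp (fun ω => X ω - Y ω) 2 ℙ := (Lp.memLp (X - Y)).ae_eq (Lp.coeFn_sub X Y)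
  exact (memLp_two_iff_integrable_sq_norm hXY.aestronglyMeasurable).mp hXY

variable [InnerProductSpace ℝ E]

theorem sqrt_integral_norm_sub_sq_map_prodMk (X Y : Lp E 2 ℙ) :
    √(∫ p : E × E, ‖p.1 - p.2‖ ^ 2 ∂(ℙ.map fun ω => (X ω, Y ω))) = dist X Y := by
  rw [integral_map
    ((Lp.aestronglyMeasurable X).aemeasurable.prodMk (Lp.aestronglyMeasurable Y).aemeasurable)
    (by fun_prop), dist_eq_norm, ← Real.sqrt_sq (norm_nonneg _),
    norm_sq_eq_integral_norm_sq]
  exact congrArg _ <| integral_congr_ae <|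
    (Lp.coeFn_sub X Y).mono fun ω h => by simp only [h, Pi.sub_apply]

theorem integral_inner_sub_map_prodMk {g : E → E} (X Y : Lp E 2 ℙ)
    (hg : AEStronglyMeasurable g (ℙ.map X)) {G : Lp E 2 ℙ} (hG : G =ᵐ[ℙ] g ∘ X) :
    ∫ p : E × E, ⟪g p.1, p.2 - p.1⟫ ∂(ℙ.map fun ω => (X ω, Y ω)) = ⟪G, Y - X⟫ := by
  have hXY : AEMeasurable (fun ω => (X ω, Y ω)) ℙ :=
    (Lp.aestronglyMeasurable X).aemeasurable.prodMk (Lp.aestronglyMeasurable Y).aemeasurable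
  have hg₁ : AEStronglyMeasurable (fun p : E × E => g p.1) (ℙ.map fun ω => (X ω, Y ω)) := by
    rw [← Measure.fst_map_prodMk₀ (Lp.aestronglyMeasurable Y).aemeasurable] at hg
    exact hg.comp_aemeasurable measurable_fst.aemeasurable
  rw [integral_map hXY (hg₁.inner (by fun_prop)), inner_eq_integral_of_ae_eq hG]
  exact integral_congr_ae <|
    (Lp.coeFn_sub Y X).mono fun ω h => by simp only [h, Pi.sub_apply, Function.comp_apply]

end MeasureTheory.L2

/-- The Lagrangian lift of a plan-wise Fréchet differentiable function over the
Wasserstein space is Fréchet differentiable, with gradient `g ∘ X`. -/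
theorem lift_hasFDerivAt_of_planwise_differentiable
    {Ω : Type*} [MeasurableSpace Ω] {d : ℕ}
    (ℙ : Measure Ω) [IsProbabilityMeasure ℙ]
    (Φ : Measure (EuclideanSpace ℝ (Fin d)) → ℝ)
    (X : Lp (EuclideanSpace ℝ (Fin d)) 2 ℙ)
    (g : EuclideanSpace ℝ (Fin d) → EuclideanSpace ℝ (Fin d))
    (hg : MemLp g 2 (Measure.map (X : Ω → EuclideanSpace ℝ (Fin d)) ℙ))
    (hdiff : ∀ ε > (0 : ℝ), ∃ δ > (0 : ℝ),
      ∀ ν : Measure (EuclideanSpace ℝ (Fin d)), IsProbabilityMeasure ν →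
        Integrable (fun y => ‖y‖ ^ 2) ν →
        ∀ γ : Measure (EuclideanSpace ℝ (Fin d) × EuclideanSpace ℝ (Fin d)),
          IsProbabilityMeasure γ →
          γ.map Prod.fst = Measure.map (X : Ω → EuclideanSpace ℝ (Fin d)) ℙ →
          γ.map Prod.snd = ν →
          Integrable (fun p => ‖p.1 - p.2‖ ^ 2) γ →
          Real.sqrt (∫ p, ‖p.1 - p.2‖ ^ 2 ∂γ) ≤ δ →
          |Φ ν - Φ (Measure.map (X : Ω → EuclideanSpace ℝ (Fin d)) ℙ)
              - ∫ p, ⟪g p.1, p.2 - p.1⟫ ∂γ|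
            ≤ ε * Real.sqrt (∫ p, ‖p.1 - p.2‖ ^ 2 ∂γ)) :
    ∃ L : Lp (EuclideanSpace ℝ (Fin d)) 2 ℙ →L[ℝ] ℝ,
      (∀ H : Lp (EuclideanSpace ℝ (Fin d)) 2 ℙ,
        L H = ∫ ω, ⟪g ((X : Ω → EuclideanSpace ℝ (Fin d)) ω),
            (H : Ω → EuclideanSpace ℝ (Fin d)) ω⟫ ∂ℙ) ∧
      HasFDerivAt
        (fun Y : Lp (EuclideanSpace ℝ (Fin d)) 2 ℙ =>
          Φ (Measure.map (Y : Ω → EuclideanSpace ℝ (Fin d)) ℙ))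
        L X := by
  have hXm : AEMeasurable X ℙ := (Lp.aestronglyMeasurable X).aemeasurable
  have hgX : MemLp (g ∘ X) 2 ℙ := (memLp_map_measure_iff hg.aestronglyMeasurable hXm).mp hg
  refine ⟨innerSL ℝ (hgX.toLp _), L2.inner_eq_integral_of_ae_eq hgX.coeFn_toLp, ?_⟩
  rw [hasFDerivAt_iff_isLittleO, Asymptotics.isLittleO_iff]
  intro ε hε
  obtain ⟨δ, hδ, hΦ⟩ := hdiff ε hε
  filter_upwards [Metric.closedBall_mem_nhds X hδ] with Y hY
  have hYm : AEMeasurable Y ℙ := (Lp.aestronglyMeasurable Y).aemeasurable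
  have hexp := hΦ _ (Measure.isProbabilityMeasure_map hYm) (L2.integrable_norm_sq_map Y) _
    (Measure.isProbabilityMeasure_map (hXm.prodMk hYm)) (Measure.fst_map_prodMk₀ hYm)
    (Measure.snd_map_prodMk₀ hXm) (L2.integrable_norm_sub_sq_map_prodMk X Y)
    (by rw [L2.sqrt_integral_norm_sub_sq_map_prodMk, dist_comm]; exact hY)
  rwa [L2.sqrt_integral_norm_sub_sq_map_prodMk, dist_comm, dist_eq_norm,
    L2.integral_inner_sub_map_prodMk X Y hg.aestronglyMeasurable hgX.coeFn_toLp] at hexp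
end

section
/- Let X : Ω → ℝ^d be measurable with law μ := X♯ℙ, and let A : ℝ^d → ℝ^{d×d}, B : ℝ^d × ℝ^d → ℝ^{d×d} be bounded measurable. Define T̃ on L²_ℙ(Ω;ℝ^d) by (T̃H)(ω) := A(X(ω))H(ω) + ∫_Ω B(X(ω),X(θ))H(θ) dℙ(θ), and T_μ on L²_μ(ℝ^d;ℝ^d) by (T_μξ)(x) := A(x)ξ(x) + ∫_{ℝ^d} B(x,y)ξ(y) dμ(y). If T_μ is injective, then every H ∈ L²_ℙ(Ω;ℝ^d) with T̃H = 0 satisfies 𝔼[H | σ(X)] = 0 ℙ-almost everywhere. -/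
/-!
By Doob–Dynkin, `ℙ[H | σ(X)] = ξ ∘ X` for a measurable `ξ`, which lies in `L²_μ` since conditional
expectation contracts `L²`. The factors `A (X ω)` and `B x (X θ)` are bounded and
`σ(X)`-measurable, so they pull out of the conditional expectation: the integral term of `T̃ H` at
`ω` equals `∫ B (X ω) y (ξ y) dμ(y)`, a function of `X ω`, and conditioning `A(X) H` on `σ(X)` gives
`A(X) ξ(X)`. Hence conditioning `T̃ H = 0` on `σ(X)` yields `(T_μ ξ)(X) = 0` ℙ-a.e., i.e.
`T_μ ξ = 0` μ-a.e., and injectivity gives `ξ = 0`.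
-/

open MeasureTheory

abbrev Ed (d : ℕ) : Type := EuclideanSpace ℝ (Fin d)

section OperatorFields

variable {α 𝕜 E F : Type*} [MeasurableSpace α] [NontriviallyNormedField 𝕜] [CompleteSpace 𝕜]
  [NormedAddCommGroup E] [NormedSpace 𝕜 E] [FiniteDimensional 𝕜 E]
  [NormedAddCommGroup F] [NormedSpace 𝕜 F]

theorem MeasureTheory.StronglyMeasurable.of_apply_continuousLinearMap {f : α → E →L[𝕜] F}
    (hf : ∀ v, StronglyMeasurable (f · v)) : StronglyMeasurable f := by
  let b := Module.finBasis 𝕜 E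
  have hsum : f = fun a =>
      ∑ i, (LinearMap.toContinuousLinearMap (b.coord i)).smulRight (f a (b i)) := by
    ext a v
    simp only [FunLike.coe_sum, Finset.sum_apply, ContinuousLinearMap.smulRight_apply,
      LinearMap.coe_toContinuousLinearMap', Module.Basis.coord_apply]
    conv_lhs => rw [← b.sum_repr v, map_sum]
    simp only [map_smul]
  rw [hsum]
  exact Finset.stronglyMeasurable_fun_sum _ fun i _ =>
    (ContinuousLinearMap.smulRightL 𝕜 E F _).continuous.comp_stronglyMeasurable (hf (b i))

theorem MeasureTheory.StronglyMeasurable.of_measurable_uncurry_continuousLinearMap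
    [MeasurableSpace E] [MeasurableSpace F] [BorelSpace F] [SecondCountableTopology F]
    {f : α → E →L[𝕜] F} (hf : Measurable fun p : α × E => f p.1 p.2) : StronglyMeasurable f :=
  .of_apply_continuousLinearMap fun _ =>
    (hf.comp (measurable_id.prodMk measurable_const)).stronglyMeasurable

end OperatorFields

section ComapCondExp

variable {Ω S F G : Type*} {mΩ : MeasurableSpace Ω} [mS : MeasurableSpace S] {ℙ : Measure Ω}
  [IsFiniteMeasure ℙ] {X : Ω → S}
  [NormedAddCommGroup F] [NormedSpace ℝ F] [CompleteSpace F]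
  [NormedAddCommGroup G] [NormedSpace ℝ G] [CompleteSpace G]

theorem condExp_comap_eq_comp_of_ae_eq_comp (hX : Measurable X) {f : Ω → G} {g : S → G}
    (hf : Integrable f ℙ) (hg : StronglyMeasurable g) (hfg : f =ᵐ[ℙ] g ∘ X) :
    ℙ[f | mS.comap X] =ᵐ[ℙ] g ∘ X := by
  refine (condExp_congr_ae hfg).trans (.of_eq ?_)
  exact condExp_of_stronglyMeasurable hX.comap_le (hg.comp_measurable (comap_measurable X))
    ((integrable_congr hfg).1 hf)

theorem condExp_comap_apply_comp (hX : Measurable X) {Φ : S → F →L[ℝ] G}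
    (hΦ : StronglyMeasurable Φ) {C : ℝ} (hC : ∀ x, ‖Φ x‖ ≤ C) {H : Ω → F} (hH : Integrable H ℙ) :
    ℙ[fun ω => Φ (X ω) (H ω) | mS.comap X] =ᵐ[ℙ] fun ω => Φ (X ω) (ℙ[H | mS.comap X] ω) :=
  condExp_stronglyMeasurable_bilin_of_bound (ContinuousLinearMap.id ℝ _) hX.comap_le
    (hΦ.comp_measurable (comap_measurable X)) hH C (ae_of_all _ fun ω => hC (X ω))

theorem integral_apply_comp_eq_integral_map (hX : Measurable X) {Φ : S → F →L[ℝ] G}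
    (hΦ : StronglyMeasurable Φ) {C : ℝ} (hC : ∀ x, ‖Φ x‖ ≤ C) {H : Ω → F} (hH : Integrable H ℙ)
    {ξ : S → F} (hξ : StronglyMeasurable ξ) (hHξ : ℙ[H | mS.comap X] = ξ ∘ X) :
    ∫ ω, Φ (X ω) (H ω) ∂ℙ = ∫ x, Φ x (ξ x) ∂(ℙ.map X) := calc
  _ = ∫ ω, (ℙ[fun ω => Φ (X ω) (H ω) | mS.comap X]) ω ∂ℙ := (integral_condExp hX.comap_le).symm
  _ = ∫ ω, Φ (X ω) (ξ (X ω)) ∂ℙ := by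
    refine integral_congr_ae ?_
    simpa [hHξ] using condExp_comap_apply_comp hX hΦ hC hH
  _ = ∫ x, Φ x (ξ x) ∂(ℙ.map X) := by
    refine (integral_map (f := fun x => Φ x (ξ x)) hX.aemeasurable ?_).symm
    exact (ContinuousLinearMap.id ℝ (F →L[ℝ] G)).aestronglyMeasurable_comp₂
      hΦ.aestronglyMeasurable hξ.aestronglyMeasurable

theorem ae_map_apply_add_eq_zero (hX : Measurable X) {Φ : S → F →L[ℝ] G}
    (hΦ : StronglyMeasurable Φ) {C : ℝ} (hC : ∀ x, ‖Φ x‖ ≤ C) {H : Ω → F} (hH : Integrable H ℙ)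
    {ξ : S → F} (hξ : StronglyMeasurable ξ) (hHξ : ℙ[H | mS.comap X] = ξ ∘ X) {g : S → G}
    (hg : StronglyMeasurable g) (h : (fun ω => Φ (X ω) (H ω) + g (X ω)) =ᵐ[ℙ] 0) :
    (fun x => Φ x (ξ x) + g x) =ᵐ[ℙ.map X] 0 := by
  have hΦH : ℙ[fun ω => Φ (X ω) (H ω) | mS.comap X] =ᵐ[ℙ] (-g) ∘ X :=
    condExp_comap_eq_comp_of_ae_eq_comp hX
      ((ContinuousLinearMap.id ℝ _).integrable_of_bilin_of_bdd_left C
        (hΦ.comp_measurable hX).aestronglyMeasurable (ae_of_all _ fun ω => hC (X ω)) hH)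
      hg.neg (h.mono fun ω hω => eq_neg_of_add_eq_zero_left hω)
  refine (ae_map_iff hX.aemeasurable ?_).2 ?_
  · exact ((ContinuousLinearMap.id ℝ (F →L[ℝ] G)).continuous₂.comp_stronglyMeasurable
      (hΦ.prodMk hξ) |>.add hg).measurableSet_eq_fun stronglyMeasurable_const
  filter_upwards [hΦH, condExp_comap_apply_comp hX hΦ hC hH] with ω hΦHω hpull
  rw [hHξ, hΦHω, Function.comp_apply, Function.comp_apply, Pi.neg_apply] at hpull
  simp [← hpull]

end ComapCondExp

/-- If the Eulerian multiplication-plus-kernel operator `T_μ` is injective on `L²_μ`,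
then any `H ∈ L²_ℙ` in the kernel of its lift `T̃` has vanishing conditional
expectation with respect to `σ(X)`. -/
theorem condexp_eq_zero_of_lifted_kernel_of_injective
    {Ω : Type*} [MeasurableSpace Ω] {d : ℕ}
    (ℙ : Measure Ω) [IsProbabilityMeasure ℙ]
    (X : Ω → Ed d) (hX : Measurable X)
    (A : Ed d → Ed d →L[ℝ] Ed d) (B : Ed d → Ed d → Ed d →L[ℝ] Ed d)
    (hAmeas : Measurable fun p : Ed d × Ed d => A p.1 p.2)
    (hBmeas : Measurable fun p : (Ed d × Ed d) × Ed d => B p.1.1 p.1.2 p.2)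
    (hAbd : ∃ CA : ℝ, ∀ x, ‖A x‖ ≤ CA)
    (hBbd : ∃ CB : ℝ, ∀ x y, ‖B x y‖ ≤ CB)
    (hinj : ∀ ξ : Ed d → Ed d, MemLp ξ 2 (Measure.map X ℙ) →
      ((fun x => A x (ξ x) + ∫ y, B x y (ξ y) ∂(Measure.map X ℙ))
          =ᵐ[Measure.map X ℙ] 0) →
      ξ =ᵐ[Measure.map X ℙ] 0) :
    ∀ H : Ω → Ed d, MemLp H 2 ℙ →
      ((fun ω => A (X ω) (H ω) + ∫ θ, B (X ω) (X θ) (H θ) ∂ℙ) =ᵐ[ℙ] 0) →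
      ℙ[H | MeasurableSpace.comap X inferInstance] =ᵐ[ℙ] 0 := by
  intro H hH hker
  obtain ⟨CA, hCA⟩ := hAbd
  obtain ⟨CB, hCB⟩ := hBbd
  have hA : StronglyMeasurable A := .of_measurable_uncurry_continuousLinearMap hAmeas
  have hB (x : Ed d) : StronglyMeasurable (B x) :=
    .of_measurable_uncurry_continuousLinearMap
      (hBmeas.comp (f := fun p : Ed d × Ed d => ((x, p.1), p.2)) (by fun_prop))
  have hHi : Integrable H ℙ := hH.integrable one_le_two
  obtain ⟨ξ, hξ, hHξ⟩ := (stronglyMeasurable_condExp (m := MeasurableSpace.comap X inferInstance)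
    (f := H) (μ := ℙ)).exists_eq_measurable_comp
  have hBξ : StronglyMeasurable fun x => ∫ y, B x y (ξ y) ∂(ℙ.map X) :=
    (hBmeas.comp (f := fun p : Ed d × Ed d => (p, ξ p.2))
      (by fun_prop)).stronglyMeasurable.integral_prod_right'
  have hBH (ω : Ω) : ∫ θ, B (X ω) (X θ) (H θ) ∂ℙ = ∫ y, B (X ω) y (ξ y) ∂(ℙ.map X) :=
    integral_apply_comp_eq_integral_map hX (hB (X ω)) (hCB (X ω)) hHi hξ hHξ
  have hEuler : (fun x => A x (ξ x) + ∫ y, B x y (ξ y) ∂(ℙ.map X)) =ᵐ[ℙ.map X] 0 :=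
    ae_map_apply_add_eq_zero hX hA hCA hHi hξ hHξ hBξ (by simpa only [hBH] using hker)
  have hξ2 : MemLp ξ 2 (ℙ.map X) :=
    (memLp_map_measure_iff hξ.aestronglyMeasurable hX.aemeasurable).2
      (hHξ ▸ hH.condExp one_le_two)
  rw [hHξ]
  exact ae_eq_comp hX.aemeasurable (hinj ξ hξ2 hEuler)
end

section
/- Let μ be a Borel probability measure on ℝ^d with finite second moment and let F : ℝ^d → ℝ^{d×d} be bounded and continuous. For every ε > 0 there exists δ > 0 such that for every s ∈ [0,1] and every Borel probability measure γ on ℝ^d × ℝ^d whose first marginal equals μ, whose second moment is finite, and which satisfies W_{2,γ} := (∫ |x−y|² dγ(x,y))^{1/2} ≤ δ, one has ∫ ‖F(x + s(y−x)) − F(x)‖·|x−y| dγ(x,y) ≤ ε·W_{2,γ}. -/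
/-! Let `f(x, y) = ‖F(x + s(y − x)) − F(x)‖ ≤ 2C`. Off the bad set `{|x| > R} ∪ {|x − y| ≥ η}`,
uniform continuity of `F` on a ball gives `f ≤ ε/2`. The bad set has `γ`-mass at most
`μ{|x| > R} + W²/η²` (first marginal and Chebyshev), which is small once `R` is large (tightness
of `μ`) and `W ≤ δ ≪ η`. Cauchy–Schwarz then gives `∫ f |x − y| dγ ≤ ‖f‖_{L²(γ)} W` with
`‖f‖²_{L²(γ)} ≤ (ε/2)² + (2C)² γ(bad) ≤ ε²`. -/

open MeasureTheory Filter Topology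

section

variable {α : Type*} [MeasurableSpace α] {γ : Measure α}

theorem integral_mul_le_sqrt_mul_sqrt_of_nonneg {f g : α → ℝ}
    (hf0 : 0 ≤ᵐ[γ] f) (hg0 : 0 ≤ᵐ[γ] g) (hf : MemLp f 2 γ) (hg : MemLp g 2 γ) :
    ∫ a, f a * g a ∂γ ≤ √(∫ a, f a ^ 2 ∂γ) * √(∫ a, g a ^ 2 ∂γ) := by
  have h := integral_mul_le_Lp_mul_Lq_of_nonneg Real.HolderConjugate.two_two hf0 hg0
    (by simpa using hf) (by simpa using hg)
  simpa only [Real.rpow_two, Real.sqrt_eq_rpow] using h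

theorem integral_sq_le_of_le_outside [IsProbabilityMeasure γ] {f : α → ℝ} {S : Set α}
    {a B : ℝ} (hS : MeasurableSet S) (hf0 : ∀ x, 0 ≤ f x) (hfB : ∀ x, f x ≤ B)
    (hfS : ∀ x ∉ S, f x ≤ a) :
    ∫ x, f x ^ 2 ∂γ ≤ a ^ 2 + B ^ 2 * γ.real S := by
  have hpt : ∀ x, f x ^ 2 ≤ a ^ 2 + S.indicator (fun _ => B ^ 2) x := by
    intro x
    by_cases hx : x ∈ S
    · simp only [Set.indicator_of_mem hx]
      nlinarith [hf0 x, hfB x, sq_nonneg a]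
    · simp only [Set.indicator_of_notMem hx]
      nlinarith [hf0 x, hfS x hx]
  calc ∫ x, f x ^ 2 ∂γ ≤ ∫ x, a ^ 2 + S.indicator (fun _ => B ^ 2) x ∂γ :=
        integral_mono_of_nonneg (ae_of_all _ fun x => sq_nonneg _)
          ((integrable_const _).add ((integrable_const _).indicator hS)) (ae_of_all _ hpt)
    _ = a ^ 2 + B ^ 2 * γ.real S := by
        rw [integral_add (integrable_const _) ((integrable_const _).indicator hS),
          integral_const, integral_indicator_const _ hS, probReal_univ, smul_eq_mul, smul_eq_mul,
          one_mul, mul_comm]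

theorem integral_mul_le_of_le_outside [IsProbabilityMeasure γ] {f g : α → ℝ} {S : Set α}
    {a B : ℝ} (hS : MeasurableSet S) (hf : AEStronglyMeasurable f γ) (hf0 : ∀ x, 0 ≤ f x)
    (hfB : ∀ x, f x ≤ B) (hfS : ∀ x ∉ S, f x ≤ a) (hg0 : ∀ x, 0 ≤ g x) (hg : MemLp g 2 γ) :
    ∫ x, f x * g x ∂γ ≤ √(a ^ 2 + B ^ 2 * γ.real S) * √(∫ x, g x ^ 2 ∂γ) := by
  have hf2 : MemLp f 2 γ :=
    .of_bound hf B (ae_of_all _ fun x => by rw [Real.norm_of_nonneg (hf0 x)]; exact hfB x)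
  refine (integral_mul_le_sqrt_mul_sqrt_of_nonneg (ae_of_all _ hf0) (ae_of_all _ hg0) hf2 hg).trans
    (by gcongr; exact integral_sq_le_of_le_outside hS hf0 hfB hfS)

end

theorem exists_measureReal_norm_gt_le {E : Type*} [NormedAddCommGroup E] [MeasurableSpace E]
    [OpensMeasurableSpace E] (μ : Measure E) [IsFiniteMeasure μ] {κ : ℝ} (hκ : 0 < κ) :
    ∃ R : ℝ, μ.real {x | R < ‖x‖} ≤ κ := by
  have hlim : Tendsto (fun R : ℝ => μ {x | R < ‖x‖}) atTop (𝓝 0) := by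
    have h := tendsto_measure_iInter_atTop (μ := μ) (s := fun R : ℝ => {x : E | R < ‖x‖})
      (fun R => (measurableSet_lt measurable_const measurable_norm).nullMeasurableSet)
      (fun R R' h x hx => lt_of_le_of_lt h hx) ⟨0, measure_ne_top μ _⟩
    have hempty : ⋂ R : ℝ, {x : E | R < ‖x‖} = ∅ := by
      ext x
      simpa using ⟨‖x‖, le_refl _⟩
    rwa [hempty, measure_empty] at h
  obtain ⟨R, hR⟩ := (hlim.eventually (ge_mem_nhds (ENNReal.ofReal_pos.2 hκ))).exists
  exact ⟨R, ENNReal.toReal_le_of_le_ofReal hκ.le hR⟩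

theorem exists_pos_forall_dist_add_lt {E X : Type*} [NormedAddCommGroup E] [ProperSpace E]
    [PseudoMetricSpace X] {F : E → X} (hF : Continuous F) (R : ℝ) {a : ℝ} (ha : 0 < a) :
    ∃ η > 0, ∀ x v : E, ‖x‖ ≤ R → ‖v‖ < η → dist (F (x + v)) (F x) < a := by
  obtain ⟨η, hη, hFη⟩ := Metric.uniformContinuousOn_iff.1
    ((isCompact_closedBall (0 : E) (R + 1)).uniformContinuousOn_of_continuous hF.continuousOn) a ha
  refine ⟨min η 1, lt_min hη one_pos, fun x v hx hv => hFη _ ?_ _ ?_ ?_⟩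
  · rw [mem_closedBall_zero_iff]
    linarith [norm_add_le x v, min_le_right η 1]
  · rw [mem_closedBall_zero_iff]
    linarith
  · rw [dist_eq_norm, add_sub_cancel_left]
    exact hv.trans_le (min_le_left _ _)

theorem measureReal_norm_fst_gt_or_norm_sub_ge_le {E : Type*} [NormedAddCommGroup E]
    [MeasurableSpace E] [OpensMeasurableSpace E] {μ : Measure E} {γ : Measure (E × E)}
    [IsFiniteMeasure γ] (hγ : γ.map Prod.fst = μ) (hint : Integrable (fun p => ‖p.1 - p.2‖ ^ 2) γ)
    (R : ℝ) {η : ℝ} (hη : 0 < η) :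
    γ.real {p | R < ‖p.1‖ ∨ η ≤ ‖p.1 - p.2‖}
      ≤ μ.real {x | R < ‖x‖} + (∫ p, ‖p.1 - p.2‖ ^ 2 ∂γ) / η ^ 2 := by
  have hfst : γ.real {p : E × E | R < ‖p.1‖} = μ.real {x | R < ‖x‖} := by
    rw [← hγ, map_measureReal_apply measurable_fst
      (measurableSet_lt measurable_const measurable_norm)]
    rfl
  have hmarkov : γ.real {p : E × E | η ^ 2 ≤ ‖p.1 - p.2‖ ^ 2}
      ≤ (∫ p, ‖p.1 - p.2‖ ^ 2 ∂γ) / η ^ 2 := by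
    rw [le_div_iff₀ (by positivity), mul_comm]
    exact mul_meas_ge_le_integral_of_nonneg (ae_of_all _ fun _ => sq_nonneg _) hint _
  calc γ.real {p | R < ‖p.1‖ ∨ η ≤ ‖p.1 - p.2‖}
      ≤ γ.real ({p : E × E | R < ‖p.1‖} ∪ {p | η ^ 2 ≤ ‖p.1 - p.2‖ ^ 2}) :=
        measureReal_mono fun p hp => hp.imp id fun h => pow_le_pow_left₀ hη.le h 2
    _ ≤ _ := (measureReal_union_le _ _).trans (by rw [hfst]; gcongr)

theorem smallO_weighted_wasserstein_general
    {d : ℕ} (μ : Measure (Ed d)) [IsProbabilityMeasure μ]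
    (F : Ed d → Ed d →L[ℝ] Ed d)
    (hFc : Continuous F) (hFb : ∃ C : ℝ, ∀ x, ‖F x‖ ≤ C) :
    ∀ ε > (0 : ℝ), ∃ δ > (0 : ℝ),
      ∀ s : ℝ, 0 ≤ s → s ≤ 1 →
      ∀ γ : Measure (Ed d × Ed d), IsProbabilityMeasure γ →
        γ.map Prod.fst = μ →
        Integrable (fun p => ‖p.2‖ ^ 2) γ →
        Integrable (fun p => ‖p.1 - p.2‖ ^ 2) γ →
        Real.sqrt (∫ p, ‖p.1 - p.2‖ ^ 2 ∂γ) ≤ δ →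
        ∫ p, ‖F (p.1 + s • (p.2 - p.1)) - F p.1‖ * ‖p.1 - p.2‖ ∂γ
          ≤ ε * Real.sqrt (∫ p, ‖p.1 - p.2‖ ^ 2 ∂γ) := by
  obtain ⟨C, hC⟩ := hFb
  intro ε hε
  obtain ⟨κ, hκ, hCκ⟩ := exists_pos_mul_lt (by positivity : 0 < 3 * ε ^ 2 / 4) ((2 * C) ^ 2)
  obtain ⟨R, hR⟩ := exists_measureReal_norm_gt_le μ (half_pos hκ)
  obtain ⟨η, hη, hFη⟩ := exists_pos_forall_dist_add_lt hFc R (half_pos hε)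
  refine ⟨η * √(κ / 2), by positivity, fun s hs0 hs1 γ _ hγ _ hint hW => ?_⟩
  set S : Set (Ed d × Ed d) := {p | R < ‖p.1‖ ∨ η ≤ ‖p.1 - p.2‖}
  have hS : MeasurableSet S :=
    (measurableSet_lt measurable_const measurable_fst.norm).union
      (measurableSet_le measurable_const (measurable_fst.sub measurable_snd).norm)
  have hSκ : γ.real S ≤ κ := by
    have hI : (∫ p, ‖p.1 - p.2‖ ^ 2 ∂γ) / η ^ 2 ≤ κ / 2 := by
      rw [div_le_iff₀ (by positivity)]
      have := (Real.sqrt_le_iff.1 hW).2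
      rwa [mul_pow, Real.sq_sqrt (by positivity), mul_comm] at this
    linarith [measureReal_norm_fst_gt_or_norm_sub_ge_le hγ hint R hη]
  have hbound : ∀ p : Ed d × Ed d, ‖F (p.1 + s • (p.2 - p.1)) - F p.1‖ ≤ 2 * C := fun p =>
    (norm_sub_le _ _).trans (by linarith [hC p.1, hC (p.1 + s • (p.2 - p.1))])
  have hsmall : ∀ p ∉ S, ‖F (p.1 + s • (p.2 - p.1)) - F p.1‖ ≤ ε / 2 := by
    intro p hp
    obtain ⟨hp₁, hp₂⟩ := not_or.1 hp
    rw [← dist_eq_norm]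
    refine (hFη p.1 _ (not_lt.1 hp₁) ((norm_smul_le _ _).trans_lt ?_)).le
    rw [Real.norm_of_nonneg hs0, norm_sub_rev]
    nlinarith [norm_nonneg (p.1 - p.2), not_le.1 hp₂]
  calc ∫ p, ‖F (p.1 + s • (p.2 - p.1)) - F p.1‖ * ‖p.1 - p.2‖ ∂γ
      ≤ √((ε / 2) ^ 2 + (2 * C) ^ 2 * γ.real S) * √(∫ p, ‖p.1 - p.2‖ ^ 2 ∂γ) :=
        integral_mul_le_of_le_outside hS (by fun_prop) (fun _ => norm_nonneg _) hbound hsmall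
          (fun _ => norm_nonneg _) ((memLp_two_iff_integrable_sq (by fun_prop)).2 hint)
    _ ≤ ε * √(∫ p, ‖p.1 - p.2‖ ^ 2 ∂γ) := by
        gcongr
        exact Real.sqrt_le_iff.2 ⟨hε.le, by nlinarith [sq_nonneg (2 * C)]⟩

/-- Small-o estimate in the weighted Wasserstein metric: for a bounded continuous
matrix-valued map `F`, the integral `∫ ‖F(x+s(y−x)) − F(x)‖ |x−y| dγ` is a small-o of
`W_{2,γ} := (∫ |x−y|² dγ)^{1/2}`, uniformly over `s ∈ [0,1]` and over plans `γ` with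
first marginal `μ`. -/
theorem smallO_weighted_wasserstein
    {d : ℕ} (μ : Measure (Ed d)) [IsProbabilityMeasure μ]
    (hμ : Integrable (fun x => ‖x‖ ^ 2) μ)
    (F : Ed d → Ed d →L[ℝ] Ed d)
    (hFc : Continuous F) (hFb : ∃ C : ℝ, ∀ x, ‖F x‖ ≤ C) :
    ∀ ε > (0 : ℝ), ∃ δ > (0 : ℝ),
      ∀ s : ℝ, 0 ≤ s → s ≤ 1 →
      ∀ γ : Measure (Ed d × Ed d), IsProbabilityMeasure γ →
        γ.map Prod.fst = μ →
        Integrable (fun p => ‖p.2‖ ^ 2) γ →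
        Integrable (fun p => ‖p.1 - p.2‖ ^ 2) γ →
        Real.sqrt (∫ p, ‖p.1 - p.2‖ ^ 2 ∂γ) ≤ δ →
        ∫ p, ‖F (p.1 + s • (p.2 - p.1)) - F p.1‖ * ‖p.1 - p.2‖ ∂γ
          ≤ ε * Real.sqrt (∫ p, ‖p.1 - p.2‖ ^ 2 ∂γ) :=
  smallO_weighted_wasserstein_general μ F hFc hFb
end

section
/- Let H and K be real Hilbert spaces, let J : H → ℝ and G : H → K be continuously Fréchet differentiable on a neighborhood of a point x̄ ∈ H with G(x̄) = 0. Assume that x̄ is a local minimizer of J on the set {x ∈ H : G(x) = 0}, and that the Fréchet derivative DG(x̄) : H → K is surjective. Then there exists λ ∈ K such that DJ(x̄) = DG(x̄)* λ, i.e. DJ(x̄)h = ⟨λ, DG(x̄)h⟩_K for every h ∈ H. -/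
open scoped RealInnerProductSpace

/-!
By the Lyusternik–Graves theorem, at a local extremum of `J` on `{G = 0}` the map
`x ↦ (DG(x̄) x, DJ(x̄) x)` cannot be onto `K × ℝ`. When `DG(x̄)` is onto, this forces
`ker DG(x̄) ⊆ ker DJ(x̄)`, so `DJ(x̄)` factors as `ψ ∘ DG(x̄)` for a linear form `ψ` on `K`,
continuous by the open mapping theorem. The multiplier is the Riesz representative of `ψ`.
-/

namespace ContinuousLinearMap

variable {𝕜 E F G : Type*} [NontriviallyNormedField 𝕜]
  [NormedAddCommGroup E] [NormedSpace 𝕜 E] [CompleteSpace E]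
  [NormedAddCommGroup F] [NormedSpace 𝕜 F] [CompleteSpace F]
  [AddCommGroup G] [Module 𝕜 G] [TopologicalSpace G]

theorem exists_comp_eq_of_surjective_of_ker_le {T : E →L[𝕜] F} {φ : E →L[𝕜] G}
    (hT : Function.Surjective T)
    (hker : LinearMap.ker (T : E →ₗ[𝕜] F) ≤ LinearMap.ker (φ : E →ₗ[𝕜] G)) :
    ∃ ψ : F →L[𝕜] G, ψ.comp T = φ := by
  obtain ⟨S, hS⟩ := (T : E →ₗ[𝕜] F).exists_rightInverse_of_surjective
    (LinearMap.range_eq_top.2 hT)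
  have hfactor : ∀ x, φ (S (T x)) = φ x := by
    intro x
    have hx : S (T x) - x ∈ LinearMap.ker (T : E →ₗ[𝕜] F) := by
      simpa [sub_eq_zero] using LinearMap.congr_fun hS (T x)
    simpa [sub_eq_zero] using hker hx
  have hcont : Continuous ((φ : E →ₗ[𝕜] G) ∘ₗ S) :=
    (T.isQuotientMap hT).continuous_iff.2 (by
      simpa [Function.comp_def, hfactor] using φ.continuous)
  exact ⟨⟨_, hcont⟩, ext hfactor⟩

end ContinuousLinearMap

theorem IsLocalExtrOn.ker_le_ker_of_hasStrictFDerivAt_of_surjective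
    {E F : Type*} [NormedAddCommGroup E] [NormedSpace ℝ E] [CompleteSpace E]
    [NormedAddCommGroup F] [NormedSpace ℝ F] [CompleteSpace F]
    {f : E → F} {φ : E → ℝ} {x₀ : E} {f' : E →L[ℝ] F} {φ' : E →L[ℝ] ℝ}
    (hextr : IsLocalExtrOn φ {x | f x = f x₀} x₀) (hf' : HasStrictFDerivAt f f' x₀)
    (hφ' : HasStrictFDerivAt φ φ' x₀) (hsurj : Function.Surjective f') :
    LinearMap.ker (f' : E →ₗ[ℝ] F) ≤ LinearMap.ker (φ' : E →ₗ[ℝ] ℝ) := by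
  intro v hv
  by_contra hφv
  replace hφv : φ' v ≠ 0 := hφv
  refine hextr.range_ne_top_of_hasStrictFDerivAt hf' hφ' (LinearMap.range_eq_top.2 ?_)
  rintro ⟨y, t⟩
  obtain ⟨x, rfl⟩ := hsurj y
  refine ⟨x + ((t - φ' x) / φ' v) • v, ?_⟩
  have hf'v : f' v = 0 := hv
  simp [hf'v, div_mul_cancel₀ _ hφv]

/-- Lagrange multiplier rule (KKT conditions) for equality-constrained minimization in
Hilbert spaces: if `xbar` is a local minimizer of `J` on `{x | G x = 0}`, `J` and `G` are
`C¹` near `xbar`, and `DG(xbar)` is surjective, then there is a multiplier `λ ∈ K` with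
`DJ(xbar) = DG(xbar)* λ`. -/
theorem exists_lagrange_multiplier
    {H K : Type*}
    [NormedAddCommGroup H] [InnerProductSpace ℝ H] [CompleteSpace H]
    [NormedAddCommGroup K] [InnerProductSpace ℝ K] [CompleteSpace K]
    (J : H → ℝ) (G : H → K) (xbar : H)
    (hJ : ContDiffAt ℝ 1 J xbar) (hG : ContDiffAt ℝ 1 G xbar)
    (hG0 : G xbar = 0)
    (hmin : IsLocalMinOn J {x : H | G x = 0} xbar)
    (hsurj : Function.Surjective (fderiv ℝ G xbar)) :
    ∃ l : K, ∀ h : H, fderiv ℝ J xbar h = ⟪l, fderiv ℝ G xbar h⟫ := by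
  have hextr : IsLocalExtrOn J {x | G x = G xbar} xbar := Or.inl (hG0 ▸ hmin)
  have hker := IsLocalExtrOn.ker_le_ker_of_hasStrictFDerivAt_of_surjective hextr
    (hG.hasStrictFDerivAt one_ne_zero) (hJ.hasStrictFDerivAt one_ne_zero) hsurj
  obtain ⟨ψ, hψ⟩ := ContinuousLinearMap.exists_comp_eq_of_surjective_of_ker_le hsurj hker
  refine ⟨(InnerProductSpace.toDual ℝ K).symm ψ, fun h => ?_⟩
  rw [InnerProductSpace.toDual_symm_apply, ← hψ, ContinuousLinearMap.comp_apply]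
end

section
/- Let X ∈ L²_ℙ(Ω;ℝ^d) and u ∈ L²_ℙ(Ω;ℝ^k), and let L : ℝ^d × ℝ^k → ℝ be continuous, with v ↦ L(x,v) convex for every x ∈ ℝ^d, and satisfying the growth bound |L(x,v)| ≤ C(1 + |x|² + |v|²) for some constant C ≥ 0 and all (x,v). Then ∫_Ω L(X(ω), 𝔼[u|σ(X)](ω)) dℙ(ω) ≤ ∫_Ω L(X(ω), u(ω)) dℙ(ω). -/
open MeasureTheory Set

/-!
Let `κ` be the conditional distribution of `u` given `X`. Then `𝔼[u | σ(X)] = ∫ y ∂κ(X)` and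
`𝔼[L(X, u) | σ(X)] = ∫ L(X, y) ∂κ(X)` almost surely, so Jensen's inequality for the convex
function `L(X ω, ·)` and the probability measure `κ(X ω)` gives
`L(X, 𝔼[u | σ(X)]) ≤ 𝔼[L(X, u) | σ(X)]` almost surely; integrating yields the claim. Both sides
are integrable by the quadratic growth bound, since `𝔼[u | σ(X)]` is square integrable with `u`.
-/

lemma integrable_of_abs_le_quadratic_growth {Ω E F : Type*} [MeasurableSpace Ω]
    {μ : Measure Ω} [IsFiniteMeasure μ] [NormedAddCommGroup E] [NormedAddCommGroup F]
    {L : E → F → ℝ} {C : ℝ} (hgrowth : ∀ x v, |L x v| ≤ C * (1 + ‖x‖ ^ 2 + ‖v‖ ^ 2))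
    {f : Ω → E} {g : Ω → F} (hf : MemLp f 2 μ) (hg : MemLp g 2 μ)
    (hLfg : AEStronglyMeasurable (fun ω => L (f ω) (g ω)) μ) :
    Integrable (fun ω => L (f ω) (g ω)) μ := by
  have hbound : Integrable (fun ω => C * (1 + ‖f ω‖ ^ 2 + ‖g ω‖ ^ 2)) μ :=
    (((integrable_const 1).add (hf.integrable_norm_pow two_ne_zero)).add
      (hg.integrable_norm_pow two_ne_zero)).const_mul C
  exact hbound.mono' hLfg (.of_forall fun ω => hgrowth (f ω) (g ω))

open ProbabilityTheory in
lemma comp_condExp_ae_le_condExp_comp {Ω β F : Type*} [MeasurableSpace Ω] {mβ : MeasurableSpace β}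
    {μ : Measure Ω} [IsFiniteMeasure μ] [NormedAddCommGroup F] [NormedSpace ℝ F]
    [CompleteSpace F] [SecondCountableTopology F] [MeasurableSpace F] [BorelSpace F]
    {X : Ω → β} {u : Ω → F} {L : β → F → ℝ}
    (hX : Measurable X) (hu : Integrable u μ) (hLm : StronglyMeasurable (Function.uncurry L))
    (hLc : ∀ x, Continuous (L x)) (hLconv : ∀ x, ConvexOn ℝ univ (L x))
    (hint : Integrable (fun ω => L (X ω) (u ω)) μ) :
    (fun ω => L (X ω) (μ[u | mβ.comap X] ω)) ≤ᵐ[μ] μ[fun ω => L (X ω) (u ω) | mβ.comap X] := by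
  have hXu : AEMeasurable (fun ω => (X ω, u ω)) μ := hX.aemeasurable.prodMk hu.aemeasurable
  have hL_int : Integrable (Function.uncurry L) (μ.map fun ω => (X ω, u ω)) :=
    (integrable_map_measure hLm.aestronglyMeasurable hXu).mpr hint
  have hsnd_int : Integrable (fun p : β × F => p.2) (μ.map fun ω => (X ω, u ω)) :=
    (integrable_map_measure measurable_snd.aestronglyMeasurable hXu).mpr hu
  filter_upwards [condExp_ae_eq_integral_condDistrib' hX hu,
    condExp_prod_ae_eq_integral_condDistrib' hX hu.aemeasurable hL_int,
    hsnd_int.condDistrib_ae hX.aemeasurable hu.aemeasurable,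
    hL_int.condDistrib_ae hX.aemeasurable hu.aemeasurable] with ω hu_eq hL_eq hκ_id hκ_L
  rw [hu_eq]
  exact ((hLconv (X ω)).map_integral_le (hLc (X ω)).continuousOn isClosed_univ
    (.of_forall fun _ => mem_univ _) hκ_id hκ_L).trans_eq hL_eq.symm

theorem integral_comp_condexp_le_general
    {Ω : Type*} [MeasurableSpace Ω] {d k : ℕ}
    (ℙ : Measure Ω) [IsProbabilityMeasure ℙ]
    (X : Ω → EuclideanSpace ℝ (Fin d)) (hXm : Measurable X) (hX : MemLp X 2 ℙ)
    (u : Ω → EuclideanSpace ℝ (Fin k)) (hu : MemLp u 2 ℙ)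
    (L : EuclideanSpace ℝ (Fin d) → EuclideanSpace ℝ (Fin k) → ℝ)
    (hLc : Continuous fun p : EuclideanSpace ℝ (Fin d) × EuclideanSpace ℝ (Fin k) => L p.1 p.2)
    (hLconv : ∀ x, ConvexOn ℝ Set.univ (L x))
    (C : ℝ)
    (hgrowth : ∀ x v, |L x v| ≤ C * (1 + ‖x‖ ^ 2 + ‖v‖ ^ 2)) :
    ∫ ω, L (X ω) ((ℙ[u | MeasurableSpace.comap X inferInstance]) ω) ∂ℙ
      ≤ ∫ ω, L (X ω) (u ω) ∂ℙ := by
  have hcondExp : MemLp (ℙ[u | MeasurableSpace.comap X inferInstance]) 2 ℙ :=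
    hu.condExp one_le_two
  have hint : Integrable (fun ω => L (X ω) (u ω)) ℙ :=
    integrable_of_abs_le_quadratic_growth hgrowth hX hu
      (hLc.comp_aestronglyMeasurable (hX.1.prodMk hu.1))
  have hint_condExp := integrable_of_abs_le_quadratic_growth hgrowth hX hcondExp
    (hLc.comp_aestronglyMeasurable (hX.1.prodMk hcondExp.1))
  calc ∫ ω, L (X ω) ((ℙ[u | MeasurableSpace.comap X inferInstance]) ω) ∂ℙ
      ≤ ∫ ω, (ℙ[fun ω => L (X ω) (u ω) | MeasurableSpace.comap X inferInstance]) ω ∂ℙ :=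
        integral_mono_ae hint_condExp integrable_condExp
          (comp_condExp_ae_le_condExp_comp hXm (hu.integrable one_le_two)
            hLc.stronglyMeasurable (fun x => hLc.comp (.prodMk_right x)) hLconv hint)
    _ = ∫ ω, L (X ω) (u ω) ∂ℙ := integral_condExp hXm.comap_le

/-- Conditional Jensen inequality: replacing the control by its conditional expectation
with respect to `σ(X)` decreases the expected cost, for a running cost `L(x,v)` that is
continuous, convex in `v`, and of quadratic growth. -/
theorem integral_comp_condexp_le
    {Ω : Type*} [MeasurableSpace Ω] {d k : ℕ}
    (ℙ : Measure Ω) [IsProbabilityMeasure ℙ]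
    (X : Ω → EuclideanSpace ℝ (Fin d)) (hXm : Measurable X) (hX : MemLp X 2 ℙ)
    (u : Ω → EuclideanSpace ℝ (Fin k)) (hu : MemLp u 2 ℙ)
    (L : EuclideanSpace ℝ (Fin d) → EuclideanSpace ℝ (Fin k) → ℝ)
    (hLc : Continuous fun p : EuclideanSpace ℝ (Fin d) × EuclideanSpace ℝ (Fin k) => L p.1 p.2)
    (hLconv : ∀ x, ConvexOn ℝ Set.univ (L x))
    (C : ℝ) (hC : 0 ≤ C)
    (hgrowth : ∀ x v, |L x v| ≤ C * (1 + ‖x‖ ^ 2 + ‖v‖ ^ 2)) :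
    ∫ ω, L (X ω) ((ℙ[u | MeasurableSpace.comap X inferInstance]) ω) ∂ℙ
      ≤ ∫ ω, L (X ω) (u ω) ∂ℙ :=
  integral_comp_condexp_le_general ℙ X hXm hX u hu L hLc hLconv C hgrowth
end

section
/- Let H be a real Hilbert space and let Ã, B, Q, P, E be continuous linear operators on H with P and B self-adjoint. Assume the algebraic Riccati equation Ã*P + PÃ + Q + PBP = 0 and the Lyapunov equation (Ã+BP)E + E(Ã+BP)* + B = 0, where * denotes the Hilbert-space adjoint. Let T be the block operator on H × H given by T(x,y) := ((I + E P)x + E y, P x + y), and let M be the block operator M(x,y) := (Ãx − By, Qx − Ã*y). Then T M T⁻¹ is the block-diagonal operator (x,y) ↦ ((Ã+BP)x, −(Ã+BP)*y); equivalently T M = D T with D(x,y) := ((Ã+BP)x, −(Ã+BP)*y). -/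
open ContinuousLinearMap

/-- Riccati diagonalization of the Hamiltonian block matrix: if `P` solves the algebraic
Riccati equation and `E` the associated Lyapunov equation, then the change of variables
`T(x,y) = ((I+EP)x + Ey, Px + y)` conjugates `M(x,y) = (Ãx − By, Qx − Ã*y)` into the
block-diagonal operator `(x,y) ↦ ((Ã+BP)x, −(Ã+BP)*y)`, i.e. `T ∘ M = D ∘ T`. -/
theorem riccati_diagonalization
    {H : Type*} [NormedAddCommGroup H] [InnerProductSpace ℝ H] [CompleteSpace H]
    (Atil B Q P E : H →L[ℝ] H)
    (hP : IsSelfAdjoint P) (hB : IsSelfAdjoint B)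
    (hRiccati : adjoint Atil ∘L P + P ∘L Atil + Q + P ∘L B ∘L P = 0)
    (hLyapunov : (Atil + B ∘L P) ∘L E + E ∘L adjoint (Atil + B ∘L P) + B = 0) :
    ∀ x y : H,
      (((Atil x - B y) + E (P (Atil x - B y))) + E (Q x - adjoint Atil y),
        P (Atil x - B y) + (Q x - adjoint Atil y))
      = ((Atil + B ∘L P) ((x + E (P x)) + E y),
          -(adjoint (Atil + B ∘L P)) (P x + y)) := by
  have hadj : adjoint (Atil + B ∘L P) = adjoint Atil + P ∘L B := by
    simp [map_add, adjoint_comp, hP.adjoint_eq, hB.adjoint_eq]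
  have hR : ∀ v, adjoint Atil (P v) + P (Atil v) + Q v + P (B (P v)) = 0 := by
    intro v
    have := congrArg (fun f : H →L[ℝ] H => f v) hRiccati
    simpa using this
  have hL : ∀ v, Atil (E v) + B (P (E v)) + (E (adjoint Atil v) + E (P (B v))) + B v = 0 := by
    intro v
    have := congrArg (fun f : H →L[ℝ] H => f v) hLyapunov
    simpa [hadj, map_add, add_assoc] using this
  intro x y
  have hER : E (adjoint Atil (P x)) + E (P (Atil x)) + E (Q x) + E (P (B (P x))) = 0 := by
    have := congrArg E (hR x)
    simpa [map_add] using this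
  have hL1 := hL (P x)
  have hL2 := hL y
  refine Prod.ext ?_ ?_
  · simp only [add_apply, comp_apply, map_add, map_sub]
    linear_combination (norm := module) hER - hL1 - hL2
  · simp only [hadj, add_apply, comp_apply, map_add, map_sub, neg_add]
    linear_combination (norm := module) hR x
end

section
/- Let H be a real Hilbert space and let A, B be continuous linear operators on H. Suppose there exist constants M, β > 0 such that ‖exp(tA)‖ ≤ M e^{−βt} for all t ≥ 0. Then the Bochner integral X := ∫₀^∞ exp(tA*) B exp(tA) dt converges in operator norm and satisfies the Lyapunov equation A*X + X A + B = 0. -/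
/-!
Put `f t = exp(t c) b exp(t a)`. Then `f' = c f + f a`, so integrating over `[0, ∞)` and using
`f 0 = b`, `f t → 0` gives `c X + X a = -b` for `X = ∫₀^∞ f`. With `c = A* = star A` the
exponential `exp(t A*)` is `star (exp(t A))`, so it decays at the same rate as `exp(t A)`, and
`f` decays like `e^{-2βt}`, which makes it integrable and makes it vanish at infinity.
-/

open MeasureTheory ContinuousLinearMap Filter Topology Set Asymptotics NormedSpace

section ExpDecay

variable {E : Type*} [NormedAddCommGroup E]

theorem integrableOn_Ici_of_isBigO_exp_neg {f : ℝ → E} {a γ : ℝ} (hγ : 0 < γ)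
    (hf : ContinuousOn f (Ici a)) (ho : f =O[atTop] fun t => Real.exp (-γ * t)) :
    IntegrableOn f (Ici a) :=
  (hf.locallyIntegrableOn measurableSet_Ici).integrableOn_of_isBigO_atTop ho
    ⟨Ioi γ, Ioi_mem_atTop γ, exp_neg_integrableOn_Ioi γ hγ⟩

theorem tendsto_zero_of_isBigO_exp_neg {f : ℝ → E} {γ : ℝ} (hγ : 0 < γ)
    (ho : f =O[atTop] fun t => Real.exp (-γ * t)) : Tendsto f atTop (𝓝 0) :=
  ho.trans_tendsto <| Real.tendsto_exp_atBot.comp <|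
    tendsto_id.const_mul_atTop_of_neg (neg_neg_of_pos hγ)

end ExpDecay

section BanachAlgebra

variable {𝔸 : Type*} [NormedRing 𝔸] [NormedAlgebra ℝ 𝔸] [CompleteSpace 𝔸]

theorem hasDerivAt_exp_smul_mul_mul_exp_smul (a b c : 𝔸) (t : ℝ) :
    HasDerivAt (fun s : ℝ => exp (s • c) * b * exp (s • a))
      (c * (exp (t • c) * b * exp (t • a)) + exp (t • c) * b * exp (t • a) * a) t :=
  (((hasDerivAt_exp_smul_const' c t).mul_const b).mul
    (hasDerivAt_exp_smul_const a t)).congr_deriv (by simp only [mul_assoc])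

theorem continuous_exp_smul_mul_mul_exp_smul (a b c : 𝔸) :
    Continuous fun t : ℝ => exp (t • c) * b * exp (t • a) :=
  continuous_iff_continuousAt.2 fun t =>
    (hasDerivAt_exp_smul_mul_mul_exp_smul a b c t).continuousAt

theorem mul_integral_add_integral_mul_add_eq_zero {a b c : 𝔸}
    (hint : IntegrableOn (fun t : ℝ => exp (t • c) * b * exp (t • a)) (Ioi 0))
    (hlim : Tendsto (fun t : ℝ => exp (t • c) * b * exp (t • a)) atTop (𝓝 0)) :
    c * (∫ t : ℝ in Ioi 0, exp (t • c) * b * exp (t • a)) +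
      (∫ t : ℝ in Ioi 0, exp (t • c) * b * exp (t • a)) * a + b = 0 := by
  have hftc := integral_Ioi_of_hasDerivAt_of_tendsto
    (continuous_exp_smul_mul_mul_exp_smul a b c).continuousWithinAt
    (fun t _ => hasDerivAt_exp_smul_mul_mul_exp_smul a b c t)
    ((hint.const_mul c).add (hint.mul_const a)) hlim
  rw [integral_add (hint.const_mul c) (hint.mul_const a), integral_const_mul_of_integrable hint,
    integral_mul_const_of_integrable hint] at hftc
  simp [hftc]

end BanachAlgebra

theorem norm_exp_smul_star {𝔸 : Type*} [NormedRing 𝔸] [NormedAlgebra ℝ 𝔸] [StarRing 𝔸] [CStarRing 𝔸] [StarModule ℝ 𝔸] (a : 𝔸) (t : ℝ) :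
    ‖exp (t • star a)‖ = ‖exp (t • a)‖ := by
  rw [← norm_star (exp (t • a)), star_exp, star_smul, star_trivial t]

theorem lyapunov_integral_solution_general
    {H : Type*} [NormedAddCommGroup H] [InnerProductSpace ℝ H] [CompleteSpace H]
    (A B : H →L[ℝ] H) (M β : ℝ) (hβ : 0 < β)
    (hdecay : ∀ t : ℝ, 0 ≤ t → ‖NormedSpace.exp (t • A)‖ ≤ M * Real.exp (-β * t)) :
    IntegrableOn
      (fun t : ℝ =>
        NormedSpace.exp (t • adjoint A) ∘L B ∘L NormedSpace.exp (t • A))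
      (Set.Ici (0 : ℝ)) ∧
    adjoint A ∘L
        (∫ t in Set.Ici (0 : ℝ),
          NormedSpace.exp (t • adjoint A) ∘L B ∘L NormedSpace.exp (t • A)) +
      (∫ t in Set.Ici (0 : ℝ),
          NormedSpace.exp (t • adjoint A) ∘L B ∘L NormedSpace.exp (t • A)) ∘L A +
      B = 0 := by
  have hA : (fun t : ℝ => exp (t • A)) =O[atTop] fun t => Real.exp (-β * t) :=
    IsBigO.of_bound M <| (eventually_ge_atTop 0).mono fun t ht => by
      simpa only [Real.norm_eq_abs, Real.abs_exp] using hdecay t ht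
  have hAstar : (fun t : ℝ => exp (t • adjoint A)) =O[atTop] fun t => Real.exp (-β * t) := by
    rw [← star_eq_adjoint, ← isBigO_norm_left]
    exact hA.norm_left.congr_left fun t => (norm_exp_smul_star A t).symm
  have hf : (fun t : ℝ => exp (t • adjoint A) * B * exp (t • A)) =O[atTop]
      fun t => Real.exp (-(β + β) * t) := by
    refine ((hAstar.mul (isBigO_const_const B one_ne_zero atTop)).mul hA).congr_right fun t => ?_
    rw [mul_one, ← Real.exp_add]
    congr 1
    ring
  have hint := integrableOn_Ici_of_isBigO_exp_neg (a := 0) (by positivity)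
    (continuous_exp_smul_mul_mul_exp_smul A B (adjoint A)).continuousOn hf
  refine ⟨hint, ?_⟩
  rw [integral_Ici_eq_integral_Ioi]
  exact mul_integral_add_integral_mul_add_eq_zero (hint.mono_set Ioi_subset_Ici_self)
    (tendsto_zero_of_isBigO_exp_neg (by positivity) hf)

/-- If `exp(tA)` decays exponentially in operator norm, then the Bochner integral
`X = ∫₀^∞ exp(tA*) B exp(tA) dt` converges and solves the Lyapunov equation
`A*X + XA + B = 0`. -/
theorem lyapunov_integral_solution
    {H : Type*} [NormedAddCommGroup H] [InnerProductSpace ℝ H] [CompleteSpace H]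
    (A B : H →L[ℝ] H) (M β : ℝ) (hM : 0 < M) (hβ : 0 < β)
    (hdecay : ∀ t : ℝ, 0 ≤ t → ‖NormedSpace.exp (t • A)‖ ≤ M * Real.exp (-β * t)) :
    IntegrableOn
      (fun t : ℝ =>
        NormedSpace.exp (t • adjoint A) ∘L B ∘L NormedSpace.exp (t • A))
      (Set.Ici (0 : ℝ)) ∧
    adjoint A ∘L
        (∫ t in Set.Ici (0 : ℝ),
          NormedSpace.exp (t • adjoint A) ∘L B ∘L NormedSpace.exp (t • A)) +
      (∫ t in Set.Ici (0 : ℝ),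
          NormedSpace.exp (t • adjoint A) ∘L B ∘L NormedSpace.exp (t • A)) ∘L A +
      B = 0 :=
  lyapunov_integral_solution_general A B M β hβ hdecay
end

section
/- Let H be a real Banach space, A a continuous linear operator on H with ‖exp(tA)‖ ≤ M e^{−βt} for all t ≥ 0, where M ≥ 1 and β > 0. Let T > 0 and let y, R : [0,T] → H be continuous maps satisfying y(t) = exp(tA) y(0) + ∫₀ᵗ exp((t−s)A) R(s) ds for all t ∈ [0,T], together with the bound ‖R(s)‖ ≤ κ ‖y(s)‖ for all s ∈ [0,T], where κ ≥ 0 satisfies 4Mκ ≤ β. Then ‖y(t)‖ ≤ 2M ‖y(0)‖ e^{−βt/2} for all t ∈ [0,T]. -/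
/-!
Set `w(t) = e^{βt} ‖y(t)‖`. Bounding the mild-solution formula term by term with the decay
of `exp(tA)` and `‖R‖ ≤ κ‖y‖` gives the integral inequality `w(t) ≤ M‖y(0)‖ + Mκ ∫₀ᵗ w`,
so Grönwall's inequality yields `w(t) ≤ M‖y(0)‖ e^{Mκt}`. Since `Mκ ≤ β/4`, this is
`‖y(t)‖ ≤ M‖y(0)‖ e^{-3βt/4}`, which is stronger than the claim.
-/

open MeasureTheory Set

theorem mul_gronwallBound_zero_add (K ε x : ℝ) :
    K * gronwallBound 0 K ε x + ε = ε * Real.exp (K * x) := by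
  rcases eq_or_ne K 0 with rfl | hK
  · simp [gronwallBound_K0]
  · rw [gronwallBound_of_K_ne_0 hK]
    field_simp
    ring

theorem le_mul_exp_of_le_add_mul_integral {w : ℝ → ℝ} {a b C K : ℝ}
    (hw : ContinuousOn w (Icc a b)) (hK : 0 ≤ K)
    (h : ∀ t ∈ Icc a b, w t ≤ C + K * ∫ s in a..t, w s) :
    ∀ t ∈ Icc a b, w t ≤ C * Real.exp (K * (t - a)) := by
  intro t ht
  -- extend `w` continuously to `ℝ`, so that its primitive is differentiable everywhere
  set v := IccExtend (ht.1.trans ht.2) ((Icc a b).domRestrict w)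
  have hv : Continuous v := hw.domRestrict.Icc_extend'
  have hvw : EqOn v w (Icc a b) := fun x hx => IccExtend_of_mem _ _ hx
  have hvw_integral : ∀ x ∈ Icc a b, ∫ s in a..x, v s = ∫ s in a..x, w s := fun x hx =>
    intervalIntegral.integral_congr
      (hvw.mono (uIcc_subset_Icc (left_mem_Icc.2 (hx.1.trans hx.2)) hx))
  have hderiv : ∀ x, HasDerivAt (fun u => ∫ s in a..u, v s) (v x) x := fun x =>
    (hv.integral_hasStrictDerivAt a x).hasDerivAt
  have hprimitive : ∀ x ∈ Icc a b, ∫ s in a..x, w s ≤ gronwallBound 0 K C (x - a) := by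
    intro x hx
    rw [← hvw_integral x hx]
    refine le_gronwallBound_of_liminf_deriv_right_le
      (continuous_iff_continuousAt.2 fun x => (hderiv x).continuousAt).continuousOn
      (fun x _ _ hr => (hderiv x).hasDerivWithinAt.liminf_right_slope_le hr) (by simp)
      (fun x hx => ?_) x hx
    rw [hvw_integral x (Ico_subset_Icc_self hx), hvw (Ico_subset_Icc_self hx), add_comm]
    exact h x (Ico_subset_Icc_self hx)
  calc w t ≤ C + K * ∫ s in a..t, w s := h t ht
    _ ≤ C + K * gronwallBound 0 K C (t - a) := by gcongr; exact hprimitive t ht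
    _ = C * Real.exp (K * (t - a)) := by rw [add_comm, mul_gronwallBound_zero_add]

section MildSolution

variable {H : Type*} [NormedAddCommGroup H] [NormedSpace ℝ H] [CompleteSpace H]
  {A : H →L[ℝ] H} {M β : ℝ}

theorem continuous_exp_sub_smul (A : H →L[ℝ] H) (t : ℝ) :
    Continuous fun s : ℝ => NormedSpace.exp ((t - s) • A) :=
  (differentiable_exp_smul_const ℝ A).continuous.comp (continuous_const.sub continuous_id)

theorem norm_integral_exp_sub_smul_apply_le
    (hdecay : ∀ t : ℝ, 0 ≤ t → ‖NormedSpace.exp (t • A)‖ ≤ M * Real.exp (-β * t))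
    {R : ℝ → H} {g : ℝ → ℝ} {t : ℝ} (ht : 0 ≤ t)
    (hR : ContinuousOn R (Icc 0 t)) (hg : ContinuousOn g (Icc 0 t))
    (hRg : ∀ s ∈ Icc 0 t, ‖R s‖ ≤ g s) :
    ‖∫ s in (0 : ℝ)..t, NormedSpace.exp ((t - s) • A) (R s)‖ ≤
      M * Real.exp (-β * t) * ∫ s in (0 : ℝ)..t, Real.exp (β * s) * g s := by
  rw [← intervalIntegral.integral_const_mul]
  refine (intervalIntegral.norm_integral_le_integral_norm ht).trans
    (intervalIntegral.integral_mono_on ht ?_ ?_ fun s hs => ?_)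
  · have hcont := (continuous_exp_sub_smul A t).continuousOn.clm_apply hR
    exact hcont.norm.intervalIntegrable_of_Icc ht
  · have hexp : Continuous fun s => Real.exp (β * s) := by fun_prop
    exact (continuousOn_const.mul (hexp.continuousOn.mul hg)).intervalIntegrable_of_Icc ht
  · have hdecay_ts := hdecay (t - s) (sub_nonneg.2 hs.2)
    calc ‖NormedSpace.exp ((t - s) • A) (R s)‖
        ≤ ‖NormedSpace.exp ((t - s) • A)‖ * ‖R s‖ := ContinuousLinearMap.le_opNorm _ _
      _ ≤ M * Real.exp (-β * (t - s)) * g s :=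
        mul_le_mul hdecay_ts (hRg s hs) (norm_nonneg _) ((norm_nonneg _).trans hdecay_ts)
      _ = M * Real.exp (-β * t) * (Real.exp (β * s) * g s) := by
        rw [show -β * (t - s) = -β * t + β * s by ring, Real.exp_add]
        ring

theorem exp_mul_norm_le_add_mul_integral_of_mild
    (hdecay : ∀ t : ℝ, 0 ≤ t → ‖NormedSpace.exp (t • A)‖ ≤ M * Real.exp (-β * t))
    {T κ : ℝ} {y R : ℝ → H}
    (hy : ContinuousOn y (Icc 0 T)) (hR : ContinuousOn R (Icc 0 T))
    (hmild : ∀ t ∈ Icc (0 : ℝ) T,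
      y t = NormedSpace.exp (t • A) (y 0)
        + ∫ s in (0 : ℝ)..t, NormedSpace.exp ((t - s) • A) (R s))
    (hRy : ∀ s ∈ Icc (0 : ℝ) T, ‖R s‖ ≤ κ * ‖y s‖) :
    ∀ t ∈ Icc (0 : ℝ) T, Real.exp (β * t) * ‖y t‖ ≤
      M * ‖y 0‖ + M * κ * ∫ s in (0 : ℝ)..t, Real.exp (β * s) * ‖y s‖ := by
  intro t ht
  have hsub : Icc 0 t ⊆ Icc 0 T := Icc_subset_Icc_right ht.2
  have hfree : ‖NormedSpace.exp (t • A) (y 0)‖ ≤ M * Real.exp (-β * t) * ‖y 0‖ :=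
    (ContinuousLinearMap.le_opNorm _ _).trans
      (mul_le_mul_of_nonneg_right (hdecay t ht.1) (norm_nonneg _))
  have hforced : ‖∫ s in (0 : ℝ)..t, NormedSpace.exp ((t - s) • A) (R s)‖ ≤
      M * Real.exp (-β * t) * (κ * ∫ s in (0 : ℝ)..t, Real.exp (β * s) * ‖y s‖) := by
    simpa only [mul_left_comm (Real.exp _) κ, intervalIntegral.integral_const_mul] using
      norm_integral_exp_sub_smul_apply_le (g := fun s => κ * ‖y s‖) hdecay ht.1
        (hR.mono hsub) (continuousOn_const.mul (hy.mono hsub).norm) fun s hs => hRy s (hsub hs)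
  have hyt : ‖y t‖ ≤ Real.exp (-β * t) *
      (M * ‖y 0‖ + M * κ * ∫ s in (0 : ℝ)..t, Real.exp (β * s) * ‖y s‖) := by
    rw [hmild t ht]
    refine (norm_add_le _ _).trans (le_of_le_of_eq (add_le_add hfree hforced) ?_)
    ring
  calc Real.exp (β * t) * ‖y t‖
      ≤ Real.exp (β * t) * (Real.exp (-β * t) *
        (M * ‖y 0‖ + M * κ * ∫ s in (0 : ℝ)..t, Real.exp (β * s) * ‖y s‖)) := by gcongr
    _ = _ := by
      rw [← mul_assoc, ← Real.exp_add, neg_mul, add_neg_cancel, Real.exp_zero, one_mul]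

end MildSolution

theorem decay_of_mild_solution_small_remainder_general
    {H : Type*} [NormedAddCommGroup H] [NormedSpace ℝ H] [CompleteSpace H]
    (A : H →L[ℝ] H) (M β : ℝ)
    (hdecay : ∀ t : ℝ, 0 ≤ t → ‖NormedSpace.exp (t • A)‖ ≤ M * Real.exp (-β * t))
    (T : ℝ) (y R : ℝ → H)
    (hy : ContinuousOn y (Set.Icc 0 T)) (hR : ContinuousOn R (Set.Icc 0 T))
    (hmild : ∀ t ∈ Set.Icc (0 : ℝ) T,
      y t = NormedSpace.exp (t • A) (y 0)
        + ∫ s in (0 : ℝ)..t, NormedSpace.exp ((t - s) • A) (R s))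
    (κ : ℝ) (hκ : 0 ≤ κ) (hsmall : 4 * M * κ ≤ β)
    (hRy : ∀ s ∈ Set.Icc (0 : ℝ) T, ‖R s‖ ≤ κ * ‖y s‖) :
    ∀ t ∈ Set.Icc (0 : ℝ) T, ‖y t‖ ≤ 2 * M * ‖y 0‖ * Real.exp (-β * t / 2) := by
  have hM : 0 ≤ M := by simpa using (norm_nonneg _).trans (hdecay 0 le_rfl)
  have hMκ : 0 ≤ M * κ := mul_nonneg hM hκ
  have hw : ContinuousOn (fun s => Real.exp (β * s) * ‖y s‖) (Icc 0 T) :=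
    (by fun_prop : Continuous fun s => Real.exp (β * s)).continuousOn.mul hy.norm
  have hgronwall := le_mul_exp_of_le_add_mul_integral hw hMκ
    (exp_mul_norm_le_add_mul_integral_of_mild hdecay hy hR hmild hRy)
  intro t ht
  have hrate : Real.exp (M * κ * (t - 0)) ≤ Real.exp (β * t) * Real.exp (-β * t / 2) := by
    rw [← Real.exp_add, Real.exp_le_exp]
    nlinarith [ht.1]
  have hweighted : Real.exp (β * t) * ‖y t‖ ≤
      Real.exp (β * t) * (M * ‖y 0‖ * Real.exp (-β * t / 2)) :=
    calc Real.exp (β * t) * ‖y t‖ ≤ M * ‖y 0‖ * Real.exp (M * κ * (t - 0)) := hgronwall t ht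
      _ ≤ M * ‖y 0‖ * (Real.exp (β * t) * Real.exp (-β * t / 2)) := by gcongr
      _ = _ := by ring
  calc ‖y t‖ ≤ M * ‖y 0‖ * Real.exp (-β * t / 2) :=
      le_of_mul_le_mul_left hweighted (Real.exp_pos _)
    _ ≤ 2 * M * ‖y 0‖ * Real.exp (-β * t / 2) := by
      have : 0 ≤ M * ‖y 0‖ * Real.exp (-β * t / 2) := by positivity
      linarith

/-- Exponential decay for a mild solution of a semilinear equation with exponentially
stable linear part and small state-proportional remainder: if
`y(t) = exp(tA) y(0) + ∫₀ᵗ exp((t−s)A) R(s) ds` with `‖R(s)‖ ≤ κ‖y(s)‖` and `4Mκ ≤ β`,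
then `‖y(t)‖ ≤ 2M ‖y(0)‖ e^{−βt/2}`. -/
theorem decay_of_mild_solution_small_remainder
    {H : Type*} [NormedAddCommGroup H] [NormedSpace ℝ H] [CompleteSpace H]
    (A : H →L[ℝ] H) (M β : ℝ) (hM : 1 ≤ M) (hβ : 0 < β)
    (hdecay : ∀ t : ℝ, 0 ≤ t → ‖NormedSpace.exp (t • A)‖ ≤ M * Real.exp (-β * t))
    (T : ℝ) (hT : 0 < T) (y R : ℝ → H)
    (hy : ContinuousOn y (Set.Icc 0 T)) (hR : ContinuousOn R (Set.Icc 0 T))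
    (hmild : ∀ t ∈ Set.Icc (0 : ℝ) T,
      y t = NormedSpace.exp (t • A) (y 0)
        + ∫ s in (0 : ℝ)..t, NormedSpace.exp ((t - s) • A) (R s))
    (κ : ℝ) (hκ : 0 ≤ κ) (hsmall : 4 * M * κ ≤ β)
    (hRy : ∀ s ∈ Set.Icc (0 : ℝ) T, ‖R s‖ ≤ κ * ‖y s‖) :
    ∀ t ∈ Set.Icc (0 : ℝ) T, ‖y t‖ ≤ 2 * M * ‖y 0‖ * Real.exp (-β * t / 2) :=
  decay_of_mild_solution_small_remainder_general A M β hdecay T y R hy hR hmild κ hκ hsmall hRy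
end

section
/- Let H be a real Hilbert space, A a continuous linear operator on H with ‖exp(tA)‖ ≤ M e^{−βt} for all t ≥ 0, where M ≥ 1 and β > 0. Let T > 0 and let y, λ, R₁, R₂ : [0,T] → H be continuous maps satisfying, for all t ∈ [0,T], y(t) = exp(tA) y(0) + ∫₀ᵗ exp((t−s)A) R₁(s) ds and λ(t) = exp((T−t)A*) λ(T) − ∫ₜᵀ exp((s−t)A*) R₂(s) ds, together with the bound ‖R₁(s)‖ + ‖R₂(s)‖ ≤ ρ (‖y(s)‖ + ‖λ(s)‖) for all s ∈ [0,T], where ρ ≥ 0 satisfies 16Mρ ≤ β. Then for all t ∈ [0,T], ‖y(t)‖ + ‖λ(t)‖ ≤ 2M (‖y(0)‖ + ‖λ(T)‖)(e^{−βt/2} + e^{−β(T−t)/2}). -/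
/-!
Put `w(t) = e^{-βt/2} + e^{-β(T-t)/2}` and let `K` be the maximum of `(‖y‖ + ‖λ‖) / w` on
`[0, T]`. Since `w(s) ≤ e^{β|t-s|/2} w(t)`, half of the decay of the kernel `M e^{-β|t-s|}`
absorbs the variation of `w`, and each of the two Duhamel integrals is at most
`(2MρK/β) w(t)`. The mild formulas then give
`‖y‖ + ‖λ‖ ≤ (M (‖y(0)‖ + ‖λ(T)‖) + 4MρK/β) w ≤ (M (‖y(0)‖ + ‖λ(T)‖) + K/4) w`,
and evaluating at the maximiser yields `K ≤ 4/3 · M (‖y(0)‖ + ‖λ(T)‖)`.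
-/

open MeasureTheory ContinuousLinearMap Real Set

noncomputable def turnpikeWeight (β T t : ℝ) : ℝ :=
  exp (-β * t / 2) + exp (-β * (T - t) / 2)

lemma turnpikeWeight_pos (β T t : ℝ) : 0 < turnpikeWeight β T t := by
  unfold turnpikeWeight
  positivity

lemma continuous_turnpikeWeight (β T : ℝ) : Continuous (turnpikeWeight β T) := by
  unfold turnpikeWeight
  fun_prop

lemma turnpikeWeight_le_exp_mul {β : ℝ} (hβ : 0 ≤ β) (T s t : ℝ) :
    turnpikeWeight β T s ≤ exp (β * |t - s| / 2) * turnpikeWeight β T t := by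
  have h₁ := le_abs_self (t - s)
  have h₂ := neg_abs_le (t - s)
  simp only [turnpikeWeight, mul_add, ← Real.exp_add]
  gcongr <;> nlinarith

lemma integral_exp_neg_mul_le {γ : ℝ} (hγ : 0 < γ) (r : ℝ) :
    ∫ x in (0 : ℝ)..r, exp (-γ * x) ≤ 1 / γ := by
  rw [intervalIntegral.integral_comp_mul_left (fun x => exp x) (by simpa using hγ.ne'),
    integral_exp, mul_zero, exp_zero, smul_eq_mul, inv_neg, neg_mul_comm, neg_sub,
    ← div_eq_inv_mul]
  gcongr
  linarith [exp_pos (-γ * r)]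

lemma norm_exp_smul_adjoint {H : Type*} [NormedAddCommGroup H] [InnerProductSpace ℝ H]
    [CompleteSpace H] (A : H →L[ℝ] H) (t : ℝ) :
    ‖NormedSpace.exp (t • adjoint A)‖ = ‖NormedSpace.exp (t • A)‖ := by
  have h : t • adjoint A = star (t • A) := by rw [star_smul, star_trivial, star_eq_adjoint]
  rw [h, ← NormedSpace.star_exp, star_eq_adjoint, LinearIsometryEquiv.norm_map]

section Decay

variable {E : Type*} [NormedAddCommGroup E] [NormedSpace ℝ E] {S : ℝ → E →L[ℝ] E} {M β : ℝ}

lemma nonneg_of_norm_le_mul_exp (hS : ∀ τ, 0 ≤ τ → ‖S τ‖ ≤ M * exp (-β * τ)) : 0 ≤ M := by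
  simpa using (norm_nonneg _).trans (hS 0 le_rfl)

variable (hS : ∀ τ, 0 ≤ τ → ‖S τ‖ ≤ M * exp (-β * τ)) (hβ : 0 < β)
  {f : ℝ → E} {L T : ℝ} (hL : 0 ≤ L)
include hS hβ hL

lemma norm_apply_le_turnpikeWeight_mul_exp {s t : ℝ} {v : E}
    (hv : ‖v‖ ≤ L * turnpikeWeight β T s) :
    ‖S |t - s| v‖ ≤ M * L * turnpikeWeight β T t * exp (-(β / 2) * |t - s|) := by
  have hM := nonneg_of_norm_le_mul_exp hS
  have hexp : exp (-β * |t - s|) * exp (β * |t - s| / 2) = exp (-(β / 2) * |t - s|) := by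
    rw [← Real.exp_add]
    ring_nf
  calc ‖S |t - s| v‖ ≤ ‖S |t - s|‖ * ‖v‖ := le_opNorm _ _
    _ ≤ (M * exp (-β * |t - s|)) * (L * (exp (β * |t - s| / 2) * turnpikeWeight β T t)) := by
        refine mul_le_mul (hS _ (abs_nonneg _)) (hv.trans ?_) (norm_nonneg _)
          (mul_nonneg hM (exp_pos _).le)
        gcongr
        exact turnpikeWeight_le_exp_mul hβ.le T s t
    _ = M * L * turnpikeWeight β T t * exp (-(β / 2) * |t - s|) := by
        rw [← hexp]
        ring

lemma norm_integral_forward_le {a t : ℝ} (hat : a ≤ t)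
    (hf : ∀ s ∈ Icc a t, ‖f s‖ ≤ L * turnpikeWeight β T s) :
    ‖∫ s in a..t, S (t - s) (f s)‖ ≤ 2 * M * L / β * turnpikeWeight β T t := by
  have hM := nonneg_of_norm_le_mul_exp hS
  have hw := turnpikeWeight_pos β T t
  calc ‖∫ s in a..t, S (t - s) (f s)‖
      ≤ ∫ s in a..t, M * L * turnpikeWeight β T t * exp (-(β / 2) * (t - s)) := by
        refine intervalIntegral.norm_integral_le_of_norm_le hat (ae_of_all _ fun s hs => ?_)
          (Continuous.intervalIntegrable (by fun_prop) _ _)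
        have hst : |t - s| = t - s := abs_of_nonneg (by linarith [hs.2])
        have := norm_apply_le_turnpikeWeight_mul_exp hS hβ hL (t := t)
          (hf s (Ioc_subset_Icc_self hs))
        rwa [hst] at this
    _ = M * L * turnpikeWeight β T t * ∫ x in (0 : ℝ)..t - a, exp (-(β / 2) * x) := by
        rw [intervalIntegral.integral_const_mul,
          intervalIntegral.integral_comp_sub_left (fun x => exp (-(β / 2) * x)), sub_self]
    _ ≤ M * L * turnpikeWeight β T t * (1 / (β / 2)) := by
        gcongr
        exact integral_exp_neg_mul_le (by positivity) _
    _ = 2 * M * L / β * turnpikeWeight β T t := by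
        field_simp

lemma norm_integral_backward_le {t b : ℝ} (htb : t ≤ b)
    (hf : ∀ s ∈ Icc t b, ‖f s‖ ≤ L * turnpikeWeight β T s) :
    ‖∫ s in t..b, S (s - t) (f s)‖ ≤ 2 * M * L / β * turnpikeWeight β T t := by
  have hM := nonneg_of_norm_le_mul_exp hS
  have hw := turnpikeWeight_pos β T t
  calc ‖∫ s in t..b, S (s - t) (f s)‖
      ≤ ∫ s in t..b, M * L * turnpikeWeight β T t * exp (-(β / 2) * (s - t)) := by
        refine intervalIntegral.norm_integral_le_of_norm_le htb (ae_of_all _ fun s hs => ?_)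
          (Continuous.intervalIntegrable (by fun_prop) _ _)
        have hst : |t - s| = s - t := by rw [abs_sub_comm]; exact abs_of_nonneg (by linarith [hs.1])
        have := norm_apply_le_turnpikeWeight_mul_exp hS hβ hL (t := t)
          (hf s (Ioc_subset_Icc_self hs))
        rwa [hst] at this
    _ = M * L * turnpikeWeight β T t * ∫ x in (0 : ℝ)..b - t, exp (-(β / 2) * x) := by
        rw [intervalIntegral.integral_const_mul,
          intervalIntegral.integral_comp_sub_right (fun x => exp (-(β / 2) * x)), sub_self]
    _ ≤ M * L * turnpikeWeight β T t * (1 / (β / 2)) := by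
        gcongr
        exact integral_exp_neg_mul_le (by positivity) _
    _ = 2 * M * L / β * turnpikeWeight β T t := by
        field_simp

end Decay

lemma IsCompact.exists_sharp_mul_bound {α : Type*} [TopologicalSpace α] {s : Set α}
    (hs : IsCompact s) (hne : s.Nonempty) {φ w : α → ℝ} (hφ : ContinuousOn φ s)
    (hw : ContinuousOn w s) (hw₀ : ∀ x ∈ s, 0 < w x) :
    ∃ K, (∀ x ∈ s, φ x ≤ K * w x) ∧ ∃ x₀ ∈ s, φ x₀ = K * w x₀ := by
  obtain ⟨x₀, hx₀, hmax⟩ := hs.exists_isMaxOn hne (hφ.div hw fun x hx => (hw₀ x hx).ne')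
  refine ⟨φ x₀ / w x₀, fun x hx => ?_, x₀, hx₀, (div_mul_cancel₀ _ (hw₀ x₀ hx₀).ne').symm⟩
  exact (div_le_iff₀ (hw₀ x hx)).1 (hmax hx)

section MildSystem

variable {E F : Type*} [NormedAddCommGroup E] [NormedSpace ℝ E] [NormedAddCommGroup F]
  [NormedSpace ℝ F] {S : ℝ → E →L[ℝ] E} {S' : ℝ → F →L[ℝ] F} {M β T ρ K : ℝ}
  {y R₁ : ℝ → E} {lam R₂ : ℝ → F}

lemma norm_add_norm_le_of_mild (hS : ∀ τ, 0 ≤ τ → ‖S τ‖ ≤ M * exp (-β * τ))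
    (hS' : ∀ τ, 0 ≤ τ → ‖S' τ‖ ≤ M * exp (-β * τ)) (hβ : 0 < β)
    (hmildy : ∀ t ∈ Icc 0 T, y t = S t (y 0) + ∫ s in (0 : ℝ)..t, S (t - s) (R₁ s))
    (hmildlam : ∀ t ∈ Icc 0 T, lam t = S' (T - t) (lam T) - ∫ s in t..T, S' (s - t) (R₂ s))
    (hρ : 0 ≤ ρ) (hRbound : ∀ s ∈ Icc 0 T, ‖R₁ s‖ + ‖R₂ s‖ ≤ ρ * (‖y s‖ + ‖lam s‖))
    (hK : 0 ≤ K) (hbound : ∀ s ∈ Icc 0 T, ‖y s‖ + ‖lam s‖ ≤ K * turnpikeWeight β T s)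
    {t : ℝ} (ht : t ∈ Icc 0 T) :
    ‖y t‖ + ‖lam t‖ ≤ (M * (‖y 0‖ + ‖lam T‖) + 4 * M * ρ * K / β) * turnpikeWeight β T t := by
  obtain ⟨ht₀, htT⟩ := ht
  have hM := nonneg_of_norm_le_mul_exp hS
  have hR : ∀ s ∈ Icc 0 T, ‖R₁ s‖ + ‖R₂ s‖ ≤ ρ * K * turnpikeWeight β T s := fun s hs =>
    (hRbound s hs).trans (by rw [mul_assoc]; exact mul_le_mul_of_nonneg_left (hbound s hs) hρ)
  have hy : ‖y t‖ ≤ M * exp (-β * t) * ‖y 0‖ + 2 * M * (ρ * K) / β * turnpikeWeight β T t := by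
    rw [hmildy t ⟨ht₀, htT⟩]
    refine (norm_add_le _ _).trans (add_le_add ?_ ?_)
    · exact (le_opNorm _ _).trans (mul_le_mul_of_nonneg_right (hS t ht₀) (norm_nonneg _))
    · refine norm_integral_forward_le hS hβ (by positivity) ht₀ fun s hs => ?_
      exact (le_add_of_nonneg_right (norm_nonneg _)).trans (hR s (Icc_subset_Icc_right htT hs))
  have hlam : ‖lam t‖ ≤ M * exp (-β * (T - t)) * ‖lam T‖
      + 2 * M * (ρ * K) / β * turnpikeWeight β T t := by
    rw [hmildlam t ⟨ht₀, htT⟩]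
    refine (norm_sub_le _ _).trans (add_le_add ?_ ?_)
    · exact (le_opNorm _ _).trans
        (mul_le_mul_of_nonneg_right (hS' _ (sub_nonneg.2 htT)) (norm_nonneg _))
    · refine norm_integral_backward_le hS' hβ (by positivity) htT fun s hs => ?_
      exact (le_add_of_nonneg_left (norm_nonneg _)).trans (hR s (Icc_subset_Icc_left ht₀ hs))
  have hy₀ : exp (-β * t) * ‖y 0‖ ≤ exp (-β * t / 2) * (‖y 0‖ + ‖lam T‖) :=
    mul_le_mul (exp_le_exp.2 (by nlinarith)) (le_add_of_nonneg_right (norm_nonneg _))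
      (norm_nonneg _) (exp_pos _).le
  have hlamT : exp (-β * (T - t)) * ‖lam T‖ ≤ exp (-β * (T - t) / 2) * (‖y 0‖ + ‖lam T‖) :=
    mul_le_mul (exp_le_exp.2 (by nlinarith)) (le_add_of_nonneg_left (norm_nonneg _))
      (norm_nonneg _) (exp_pos _).le
  have := mul_le_mul_of_nonneg_left (add_le_add hy₀ hlamT) hM
  unfold turnpikeWeight at hy hlam ⊢
  linear_combination hy + hlam + this

end MildSystem

theorem turnpike_forward_backward_mild_system_general
    {H : Type*} [NormedAddCommGroup H] [InnerProductSpace ℝ H] [CompleteSpace H]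
    (A : H →L[ℝ] H) (M β : ℝ) (hβ : 0 < β)
    (hdecay : ∀ t : ℝ, 0 ≤ t → ‖NormedSpace.exp (t • A)‖ ≤ M * Real.exp (-β * t))
    (T : ℝ) (y lam R₁ R₂ : ℝ → H)
    (hy : ContinuousOn y (Set.Icc 0 T)) (hlam : ContinuousOn lam (Set.Icc 0 T))
    (hmildy : ∀ t ∈ Set.Icc (0 : ℝ) T,
      y t = NormedSpace.exp (t • A) (y 0)
        + ∫ s in (0 : ℝ)..t, NormedSpace.exp ((t - s) • A) (R₁ s))
    (hmildlam : ∀ t ∈ Set.Icc (0 : ℝ) T,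
      lam t = NormedSpace.exp ((T - t) • adjoint A) (lam T)
        - ∫ s in t..T, NormedSpace.exp ((s - t) • adjoint A) (R₂ s))
    (ρ : ℝ) (hρ : 0 ≤ ρ) (hsmall : 16 * M * ρ ≤ β)
    (hRbound : ∀ s ∈ Set.Icc (0 : ℝ) T,
      ‖R₁ s‖ + ‖R₂ s‖ ≤ ρ * (‖y s‖ + ‖lam s‖)) :
    ∀ t ∈ Set.Icc (0 : ℝ) T,
      ‖y t‖ + ‖lam t‖
        ≤ 2 * M * (‖y 0‖ + ‖lam T‖)
            * (Real.exp (-β * t / 2) + Real.exp (-β * (T - t) / 2)) := by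
  intro t ht
  have hM₀ := nonneg_of_norm_le_mul_exp hdecay
  have hdecay' : ∀ τ, 0 ≤ τ → ‖NormedSpace.exp (τ • adjoint A)‖ ≤ M * Real.exp (-β * τ) :=
    fun τ hτ => (norm_exp_smul_adjoint A τ).trans_le (hdecay τ hτ)
  obtain ⟨K, hK, t₀, ht₀, hKt₀⟩ := isCompact_Icc.exists_sharp_mul_bound
    (φ := fun s => ‖y s‖ + ‖lam s‖) (nonempty_Icc.2 (ht.1.trans ht.2)) (hy.norm.add hlam.norm)
    (continuous_turnpikeWeight β T).continuousOn fun s _ => turnpikeWeight_pos β T s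
  have hw₀ := turnpikeWeight_pos β T t₀
  have hK₀ : 0 ≤ K := by nlinarith [norm_nonneg (y t₀), norm_nonneg (lam t₀)]
  have himp := norm_add_norm_le_of_mild hdecay hdecay' hβ hmildy hmildlam hρ hRbound hK₀ hK ht₀
  rw [hKt₀] at himp
  have hKc : K ≤ 2 * M * (‖y 0‖ + ‖lam T‖) := by
    have hK_le := le_of_mul_le_mul_right himp hw₀
    have hsmallK : 4 * M * ρ * K / β ≤ K / 4 := by
      rw [div_le_iff₀ hβ]
      nlinarith [mul_le_mul_of_nonneg_right hsmall hK₀]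
    nlinarith [mul_nonneg hM₀ (by positivity : 0 ≤ ‖y 0‖ + ‖lam T‖)]
  calc ‖y t‖ + ‖lam t‖ ≤ K * turnpikeWeight β T t := hK t ht
    _ ≤ _ := mul_le_mul_of_nonneg_right hKc (turnpikeWeight_pos β T t).le

/-- Exponential turnpike estimate for a decoupled forward–backward mild system with an
exponentially stable generator and small coupled remainders: the forward variable `y`
and backward variable `λ` satisfy
`‖y(t)‖ + ‖λ(t)‖ ≤ 2M (‖y(0)‖ + ‖λ(T)‖)(e^{−βt/2} + e^{−β(T−t)/2})`. -/
theorem turnpike_forward_backward_mild_system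
    {H : Type*} [NormedAddCommGroup H] [InnerProductSpace ℝ H] [CompleteSpace H]
    (A : H →L[ℝ] H) (M β : ℝ) (hM : 1 ≤ M) (hβ : 0 < β)
    (hdecay : ∀ t : ℝ, 0 ≤ t → ‖NormedSpace.exp (t • A)‖ ≤ M * Real.exp (-β * t))
    (T : ℝ) (hT : 0 < T) (y lam R₁ R₂ : ℝ → H)
    (hy : ContinuousOn y (Set.Icc 0 T)) (hlam : ContinuousOn lam (Set.Icc 0 T))
    (hR₁ : ContinuousOn R₁ (Set.Icc 0 T)) (hR₂ : ContinuousOn R₂ (Set.Icc 0 T))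
    (hmildy : ∀ t ∈ Set.Icc (0 : ℝ) T,
      y t = NormedSpace.exp (t • A) (y 0)
        + ∫ s in (0 : ℝ)..t, NormedSpace.exp ((t - s) • A) (R₁ s))
    (hmildlam : ∀ t ∈ Set.Icc (0 : ℝ) T,
      lam t = NormedSpace.exp ((T - t) • adjoint A) (lam T)
        - ∫ s in t..T, NormedSpace.exp ((s - t) • adjoint A) (R₂ s))
    (ρ : ℝ) (hρ : 0 ≤ ρ) (hsmall : 16 * M * ρ ≤ β)
    (hRbound : ∀ s ∈ Set.Icc (0 : ℝ) T,
      ‖R₁ s‖ + ‖R₂ s‖ ≤ ρ * (‖y s‖ + ‖lam s‖)) :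
    ∀ t ∈ Set.Icc (0 : ℝ) T,
      ‖y t‖ + ‖lam t‖
        ≤ 2 * M * (‖y 0‖ + ‖lam T‖)
            * (Real.exp (-β * t / 2) + Real.exp (-β * (T - t) / 2)) :=
  turnpike_forward_backward_mild_system_general A M β hβ hdecay T y lam R₁ R₂ hy hlam hmildy
    hmildlam ρ hρ hsmall hRbound
end
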